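/- arXiv:2204.01643 — 2 statements merged into one kernel-verified Lean document; each statement's English description precedes it below -/
import Mathlib

section
/- Define h(x) := e^{−1/|x|}·sin(1/x) for x ≠ 0, h(0) := 0, and g(x) := ∫₀ˣ (u^{−2} e^{−1/|u|} sin(1/u) − u^{−2} e^{−1/|u|}) du (integrand understood as 0 at u = 0). Then g and h are C^∞ on all of ℝ; for every x > 0, g′(x) = x^{−2} e^{−1/x} sin(1/x) − x^{−2} e^{−1/x} and h′(x) = x^{−2} e^{−1/x} sin(1/x) − x^{−2} e^{−1/x} cos(1/x); and for every integer n ≥ 1, the n-th derivatives satisfy g^{(n)}(0) = 0 and h^{(n)}(0) = 0. -/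
/-!
For `Re c < 0` and a complex polynomial `p`, the function equal to `p(1/x) e^{c/x}` for `x > 0`
and to `0` for `x ≤ 0` is differentiable everywhere, with a derivative of the same form: at `0`
its slope `(1/x) p(1/x) e^{c/x}` tends to `0` because `e^{c/x}` beats every power of `1/x`.
Hence it is smooth, and since it vanishes for `x < 0`, all its derivatives vanish at `0` by
continuity. Taking `c = -1 + i` and `c = -1`, `h` and the integrand of `g` are of the form
`u(x) - w(-x)` with `u`, `w` real or imaginary parts of such functions, so they are smooth and
flat at `0`; `g` inherits both properties by the fundamental theorem of calculus.
-/

open Filter Metric Set Real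

noncomputable section

/-- Left derivative `f′₋(x) = d`: `(f y - f x)/(y - x) → d` as `y ↑ x`. -/
def HasLeftDeriv (f : ℝ → ℝ) (x d : ℝ) : Prop :=
  Filter.Tendsto (fun y : ℝ => (f y - f x) / (y - x)) (nhdsWithin x (Set.Iio x)) (nhds d)

/-- Right derivative `f′₊(x) = d`: `(f y - f x)/(y - x) → d` as `y ↓ x`. -/
def HasRightDeriv (f : ℝ → ℝ) (x d : ℝ) : Prop :=
  Filter.Tendsto (fun y : ℝ => (f y - f x) / (y - x)) (nhdsWithin x (Set.Ioi x)) (nhds d)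

/-- `x` is a `δ`-stationary point of `f : ℝ → ℝ`: `f′₋(x) ≤ δ` and `f′₊(x) ≥ -δ`. -/
def IsDeltaStationaryPt1 (f : ℝ → ℝ) (δ x : ℝ) : Prop :=
  ∃ dm dp : ℝ, HasLeftDeriv f x dm ∧ HasRightDeriv f x dp ∧ dm ≤ δ ∧ -δ ≤ dp

/-- `x` is a stationary point of `f : ℝ → ℝ`: `f′₋(x) ≤ 0` and `f′₊(x) ≥ 0`. -/
def IsStationaryPt1 (f : ℝ → ℝ) (x : ℝ) : Prop :=
  IsDeltaStationaryPt1 f 0 x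

/-- `h(x) = e^{-1/|x|} sin(1/x)` for `x ≠ 0`, `h(0) = 0`. -/
def hEx (x : ℝ) : ℝ := if x = 0 then 0 else Real.exp (-1 / |x|) * Real.sin (1 / x)

/-- `g(x) = ∫₀ˣ (u⁻² e^{-1/|u|} sin(1/u) - u⁻² e^{-1/|u|}) du`, integrand `0` at `u = 0`. -/
def gEx (x : ℝ) : ℝ := ∫ u in (0 : ℝ)..x,
  if u = 0 then 0
  else u⁻¹ ^ 2 * Real.exp (-1 / |u|) * Real.sin (1 / u) - u⁻¹ ^ 2 * Real.exp (-1 / |u|)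

/-- `f(x) = min {0, h(|x|)} - g(|x|)`. -/
def fEx (x : ℝ) : ℝ := min 0 (hEx |x|) - gEx |x|

open Topology Polynomial
open scoped ContDiff

def polyExpInvGlue (c : ℂ) (p : ℂ[X]) (x : ℝ) : ℂ :=
  if 0 < x then p.eval (x : ℂ)⁻¹ * Complex.exp (c * (x : ℂ)⁻¹) else 0

namespace polyExpInvGlue

variable {c : ℂ}

def derivPoly (c : ℂ) (p : ℂ[X]) : ℂ[X] := -(X ^ 2 * (derivative p + C c * p))

theorem of_pos (p : ℂ[X]) {x : ℝ} (hx : 0 < x) :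
    polyExpInvGlue c p x = p.eval (x : ℂ)⁻¹ * Complex.exp (c * (x : ℂ)⁻¹) := if_pos hx

theorem of_nonpos (p : ℂ[X]) {x : ℝ} (hx : x ≤ 0) : polyExpInvGlue c p x = 0 :=
  if_neg hx.not_gt

theorem tendsto_eval_mul_exp_atTop (hc : c.re < 0) (p : ℂ[X]) :
    Tendsto (fun t : ℝ => p.eval (t : ℂ) * Complex.exp (c * t)) atTop (𝓝 0) := by
  simp_rw [eval_eq_sum_range, Finset.sum_mul]
  rw [← Finset.sum_const_zero]
  refine tendsto_finsetSum _ fun k _ => squeeze_zero_norm' ?_ <| by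
    simpa using (tendsto_rpow_mul_exp_neg_mul_atTop_nhds_zero k (-c.re) (neg_pos.2 hc)).const_mul
      ‖p.coeff k‖
  filter_upwards [eventually_ge_atTop 0] with t ht
  simp [Complex.norm_exp, abs_of_nonneg ht, mul_assoc]

theorem tendsto_nhdsGT_zero (hc : c.re < 0) (p : ℂ[X]) :
    Tendsto (polyExpInvGlue c p) (𝓝[>] 0) (𝓝 0) := by
  refine ((tendsto_eval_mul_exp_atTop hc p).comp tendsto_inv_nhdsGT_zero).congr' ?_
  filter_upwards [self_mem_nhdsWithin] with x hx
  simp [of_pos p hx]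

theorem hasDerivAt_eval_inv_mul_exp (p : ℂ[X]) {z : ℂ} (hz : z ≠ 0) :
    HasDerivAt (fun z : ℂ => p.eval z⁻¹ * Complex.exp (c * z⁻¹))
      ((derivPoly c p).eval z⁻¹ * Complex.exp (c * z⁻¹)) z := by
  have hinv : HasDerivAt (fun z : ℂ => z⁻¹) (-(z⁻¹) ^ 2) z := by
    simpa [inv_pow] using hasDerivAt_inv hz
  refine (((p.hasDerivAt z⁻¹).comp z hinv).mul
    ((Complex.hasDerivAt_exp (c * z⁻¹)).comp z (hinv.const_mul c))).congr_deriv ?_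
  simp only [derivPoly, eval_neg, eval_mul, eval_pow, eval_X, eval_add, eval_C,
    Function.comp_apply]
  ring

theorem hasDerivAt_zero (hc : c.re < 0) (p : ℂ[X]) :
    HasDerivAt (polyExpInvGlue c p) 0 0 := by
  rw [hasDerivAt_iff_tendsto_slope, ← nhdsLT_sup_nhdsGT, tendsto_sup]
  constructor
  · refine tendsto_const_nhds.congr' ?_
    filter_upwards [self_mem_nhdsWithin] with x (hx : x < 0)
    simp [slope, of_nonpos p hx.le, of_nonpos p le_rfl]
  · refine (tendsto_nhdsGT_zero hc (X * p)).congr' ?_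
    filter_upwards [self_mem_nhdsWithin] with x (hx : 0 < x)
    simp [slope, of_pos _ hx, of_nonpos p le_rfl, mul_assoc]

theorem hasDerivAt (hc : c.re < 0) (p : ℂ[X]) (x : ℝ) :
    HasDerivAt (polyExpInvGlue c p) (polyExpInvGlue c (derivPoly c p) x) x := by
  rcases lt_trichotomy x 0 with hx | rfl | hx
  · rw [of_nonpos _ hx.le]
    refine (hasDerivAt_const x (0 : ℂ)).congr_of_eventuallyEq ?_
    filter_upwards [Iio_mem_nhds hx] with y (hy : y < 0)
    exact of_nonpos p hy.le
  · simpa [of_nonpos _ le_rfl] using hasDerivAt_zero hc p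
  · rw [of_pos _ hx]
    refine ((hasDerivAt_eval_inv_mul_exp p (Complex.ofReal_ne_zero.2 hx.ne')).comp_ofReal
      ).congr_of_eventuallyEq ?_
    filter_upwards [Ioi_mem_nhds hx] with y (hy : 0 < y)
    exact of_pos p hy

theorem iteratedDeriv_eq (hc : c.re < 0) (n : ℕ) (p : ℂ[X]) :
    iteratedDeriv n (polyExpInvGlue c p) = polyExpInvGlue c ((derivPoly c)^[n] p) := by
  induction n generalizing p with
  | zero => rfl
  | succ n ih =>
    rw [iteratedDeriv_succ', funext fun x => (hasDerivAt hc p x).deriv, ih,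
      Function.iterate_succ_apply]

theorem contDiff (hc : c.re < 0) (p : ℂ[X]) : ContDiff ℝ ∞ (polyExpInvGlue c p) :=
  contDiff_of_differentiable_iteratedDeriv fun n _ => by
    rw [iteratedDeriv_eq hc]
    exact fun x => (hasDerivAt hc _ x).differentiableAt

end polyExpInvGlue

theorem iteratedDeriv_eq_zero_of_eqOn_zero {𝕜 F : Type*} [NontriviallyNormedField 𝕜]
    [NormedAddCommGroup F] [NormedSpace 𝕜 F] {f : 𝕜 → F} {s : Set 𝕜} {x : 𝕜} {n : ℕ}
    (hf : ContDiff 𝕜 n f) (hs : IsOpen s) (hfs : EqOn f 0 s) (hx : x ∈ closure s) :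
    iteratedDeriv n f x = 0 := by
  simpa using (hfs.iteratedDeriv_of_isOpen hs n).closure (hf.continuous_iteratedDeriv' n)
    (contDiff_zero_fun.continuous_iteratedDeriv' n) hx

theorem iteratedDeriv_sub_comp_neg_zero {E : Type*} [NormedAddCommGroup E] [NormedSpace ℝ E]
    {u w : ℝ → E} {n : ℕ} (hu : ContDiff ℝ n u) (hw : ContDiff ℝ n w)
    (hu0 : ∀ x < 0, u x = 0) (hw0 : ∀ x < 0, w x = 0) :
    iteratedDeriv n (fun x => u x - w (-x)) 0 = 0 := by
  have hw' : ContDiff ℝ n fun x => w (-x) := hw.comp contDiff_neg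
  have h0 : (0 : ℝ) ∈ closure (Iio 0) := by simp
  rw [iteratedDeriv_fun_sub hu.contDiffAt hw'.contDiffAt, iteratedDeriv_comp_neg, neg_zero,
    iteratedDeriv_eq_zero_of_eqOn_zero hu isOpen_Iio hu0 h0,
    iteratedDeriv_eq_zero_of_eqOn_zero hw isOpen_Iio hw0 h0, smul_zero, sub_zero]

def expInvSinGlue (k : ℕ) (x : ℝ) : ℝ := (polyExpInvGlue (-1 + Complex.I) (X ^ k) x).im

def expInvGlue (k : ℕ) (x : ℝ) : ℝ := (polyExpInvGlue (-1) (X ^ k) x).re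

theorem expInvSinGlue_of_pos (k : ℕ) {x : ℝ} (hx : 0 < x) :
    expInvSinGlue k x = x⁻¹ ^ k * Real.exp (-1 / x) * Real.sin (1 / x) := by
  simp [expInvSinGlue, polyExpInvGlue.of_pos _ hx, Complex.exp_im, ← Complex.ofReal_inv,
    ← Complex.ofReal_pow, neg_div, mul_assoc]

theorem expInvGlue_of_pos (k : ℕ) {x : ℝ} (hx : 0 < x) :
    expInvGlue k x = x⁻¹ ^ k * Real.exp (-1 / x) := by
  simp [expInvGlue, polyExpInvGlue.of_pos _ hx, Complex.exp_re, ← Complex.ofReal_inv,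
    ← Complex.ofReal_pow, neg_div]

theorem expInvSinGlue_of_nonpos (k : ℕ) {x : ℝ} (hx : x ≤ 0) : expInvSinGlue k x = 0 := by
  simp [expInvSinGlue, polyExpInvGlue.of_nonpos _ hx]

theorem expInvGlue_of_nonpos (k : ℕ) {x : ℝ} (hx : x ≤ 0) : expInvGlue k x = 0 := by
  simp [expInvGlue, polyExpInvGlue.of_nonpos _ hx]

theorem contDiff_expInvSinGlue (k : ℕ) : ContDiff ℝ ∞ (expInvSinGlue k) :=
  Complex.imCLM.contDiff.comp (polyExpInvGlue.contDiff (by simp) _)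

theorem contDiff_expInvGlue (k : ℕ) : ContDiff ℝ ∞ (expInvGlue k) :=
  Complex.reCLM.contDiff.comp (polyExpInvGlue.contDiff (by simp) _)

theorem hEx_eq : hEx = fun x => expInvSinGlue 0 x - expInvSinGlue 0 (-x) := by
  funext x
  rcases lt_trichotomy x 0 with hx | rfl | hx
  · simp [hEx, hx.ne, expInvSinGlue_of_nonpos 0 hx.le, expInvSinGlue_of_pos 0 (neg_pos.2 hx),
      abs_of_neg hx, div_neg]
  · simp [hEx, expInvSinGlue_of_nonpos 0 le_rfl]
  · simp [hEx, hx.ne', expInvSinGlue_of_pos 0 hx, expInvSinGlue_of_nonpos 0 (neg_nonpos.2 hx.le),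
      abs_of_pos hx]

theorem contDiff_hEx : ContDiff ℝ ∞ hEx := by
  rw [hEx_eq]
  exact (contDiff_expInvSinGlue 0).sub ((contDiff_expInvSinGlue 0).comp contDiff_neg)

theorem iteratedDeriv_hEx_zero (n : ℕ) : iteratedDeriv n hEx 0 = 0 := by
  have hu := contDiff_infty.1 (contDiff_expInvSinGlue 0) n
  rw [hEx_eq]
  exact iteratedDeriv_sub_comp_neg_zero hu hu (fun x hx => expInvSinGlue_of_nonpos 0 hx.le)
    (fun x hx => expInvSinGlue_of_nonpos 0 hx.le)

theorem hasDerivAt_hEx_of_pos {x : ℝ} (hx : 0 < x) :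
    HasDerivAt hEx (x⁻¹ ^ 2 * Real.exp (-1 / x) * Real.sin (1 / x)
      - x⁻¹ ^ 2 * Real.exp (-1 / x) * Real.cos (1 / x)) x := by
  have hinv : HasDerivAt (fun y : ℝ => 1 / y) (-x⁻¹ ^ 2) x := by
    simpa [one_div, inv_pow] using hasDerivAt_inv hx.ne'
  have hneg : HasDerivAt (fun y : ℝ => -1 / y) (x⁻¹ ^ 2) x := by
    simpa [neg_div] using hinv.fun_neg
  refine (hneg.exp.mul hinv.sin).congr_deriv (by ring) |>.congr_of_eventuallyEq ?_
  filter_upwards [Ioi_mem_nhds hx] with y (hy : 0 < y)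
  simp [hEx, hy.ne', abs_of_pos hy]

def gExIntegrand (u : ℝ) : ℝ :=
  if u = 0 then 0
  else u⁻¹ ^ 2 * Real.exp (-1 / |u|) * Real.sin (1 / u) - u⁻¹ ^ 2 * Real.exp (-1 / |u|)

theorem gExIntegrand_eq : gExIntegrand = fun x =>
    (expInvSinGlue 2 x - expInvGlue 2 x) - (expInvSinGlue 2 (-x) + expInvGlue 2 (-x)) := by
  funext x
  rcases lt_trichotomy x 0 with hx | rfl | hx
  · simp [gExIntegrand, hx.ne, expInvSinGlue_of_nonpos 2 hx.le, expInvGlue_of_nonpos 2 hx.le,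
      expInvSinGlue_of_pos 2 (neg_pos.2 hx), expInvGlue_of_pos 2 (neg_pos.2 hx),
      abs_of_neg hx, div_neg]
    ring
  · simp [gExIntegrand, expInvSinGlue_of_nonpos 2 le_rfl, expInvGlue_of_nonpos 2 le_rfl]
  · simp [gExIntegrand, hx.ne', expInvSinGlue_of_pos 2 hx, expInvGlue_of_pos 2 hx,
      expInvSinGlue_of_nonpos 2 (neg_nonpos.2 hx.le),
      expInvGlue_of_nonpos 2 (neg_nonpos.2 hx.le), abs_of_pos hx]

theorem contDiff_gExIntegrand : ContDiff ℝ ∞ gExIntegrand := by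
  rw [gExIntegrand_eq]
  exact ((contDiff_expInvSinGlue 2).sub (contDiff_expInvGlue 2)).sub
    (((contDiff_expInvSinGlue 2).add (contDiff_expInvGlue 2)).comp contDiff_neg)

theorem iteratedDeriv_gExIntegrand_zero (n : ℕ) : iteratedDeriv n gExIntegrand 0 = 0 := by
  have hu := contDiff_infty.1 ((contDiff_expInvSinGlue 2).sub (contDiff_expInvGlue 2)) n
  have hw := contDiff_infty.1 ((contDiff_expInvSinGlue 2).add (contDiff_expInvGlue 2)) n
  rw [gExIntegrand_eq]
  refine iteratedDeriv_sub_comp_neg_zero hu hw ?_ ?_ <;> intro x hx <;>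
    simp [expInvSinGlue_of_nonpos 2 hx.le, expInvGlue_of_nonpos 2 hx.le]

theorem hasDerivAt_gEx (x : ℝ) : HasDerivAt gEx (gExIntegrand x) x :=
  (contDiff_gExIntegrand.continuous.integral_hasStrictDerivAt 0 x).hasDerivAt

theorem contDiff_gEx : ContDiff ℝ ∞ gEx := by
  rw [contDiff_infty_iff_deriv, funext fun x => (hasDerivAt_gEx x).deriv]
  exact ⟨fun x => (hasDerivAt_gEx x).differentiableAt, contDiff_gExIntegrand⟩

theorem iteratedDeriv_gEx_zero (n : ℕ) : iteratedDeriv n gEx 0 = 0 := by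
  cases n with
  | zero => simp [gEx]
  | succ n =>
    rw [iteratedDeriv_succ', funext fun x => (hasDerivAt_gEx x).deriv]
    exact iteratedDeriv_gExIntegrand_zero n

/-- `g` and `h` are `C^∞` on all of `ℝ`; for `x > 0`,
`g′(x) = x⁻² e^{-1/x} sin(1/x) - x⁻² e^{-1/x}` and
`h′(x) = x⁻² e^{-1/x} sin(1/x) - x⁻² e^{-1/x} cos(1/x)`; and all higher derivatives
of `g` and `h` vanish at `0`. -/
theorem gEx_hEx_smooth :
    ContDiff ℝ (⊤ : ℕ∞) gEx ∧ ContDiff ℝ (⊤ : ℕ∞) hEx ∧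
    (∀ x : ℝ, 0 < x → HasDerivAt gEx
      (x⁻¹ ^ 2 * Real.exp (-1 / x) * Real.sin (1 / x) - x⁻¹ ^ 2 * Real.exp (-1 / x)) x) ∧
    (∀ x : ℝ, 0 < x → HasDerivAt hEx
      (x⁻¹ ^ 2 * Real.exp (-1 / x) * Real.sin (1 / x)
        - x⁻¹ ^ 2 * Real.exp (-1 / x) * Real.cos (1 / x)) x) ∧
    (∀ n : ℕ, 1 ≤ n → iteratedDeriv n gEx 0 = 0 ∧ iteratedDeriv n hEx 0 = 0) :=
  ⟨contDiff_gEx, contDiff_hEx,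
    fun x hx => by simpa [gExIntegrand, hx.ne', abs_of_pos hx] using hasDerivAt_gEx x,
    fun _ hx => hasDerivAt_hEx_of_pos hx,
    fun n _ => ⟨iteratedDeriv_gEx_zero n, iteratedDeriv_hEx_zero n⟩⟩
end
end

section
/- Define f : ℝ → ℝ by f(x) := min{0, h(|x|)} − g(|x|), where h(x) := e^{−1/|x|}·sin(1/x) for x ≠ 0, h(0) := 0, and g(x) := ∫₀ˣ (u^{−2} e^{−1/|u|} sin(1/u) − u^{−2} e^{−1/|u|}) du (integrand understood as 0 at u = 0). Then for every integer k ≥ 1 and every t ∈ (0, π), f is differentiable at 1/(2kπ − t) with f′(1/(2kπ − t)) = (2kπ − t)² e^{−(2kπ − t)} (1 − cos(t)), and consequently f′(1/(2kπ − t)) ≤ (1/2)(2kπ)² e^{2kπ} t². -/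
open Filter Metric Set Real
open scoped Topology

noncomputable section

/-- The integrand of `gEx`. -/
def phiEx (u : ℝ) : ℝ :=
  if u = 0 then 0
  else u⁻¹ ^ 2 * Real.exp (-1 / |u|) * Real.sin (1 / u) - u⁻¹ ^ 2 * Real.exp (-1 / |u|)

lemma gEx_eq (x : ℝ) : gEx x = ∫ u in (0 : ℝ)..x, phiEx u := rfl

lemma phiEx_cont : Continuous phiEx := by
  rw [continuous_iff_continuousAt]
  intro x
  rcases eq_or_ne x 0 with rfl | hx
  · -- continuity at 0
    have habs : Tendsto (fun u : ℝ => |u|) (𝓝[≠] (0 : ℝ)) (𝓝[>] (0 : ℝ)) := by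
      apply tendsto_nhdsWithin_of_tendsto_nhds_of_eventually_within
      · simpa using (continuous_abs.tendsto (0 : ℝ)).mono_left nhdsWithin_le_nhds
      · filter_upwards [self_mem_nhdsWithin] with u hu
        exact abs_pos.2 hu
    have h1 : Tendsto (fun u : ℝ => |u|⁻¹) (𝓝[≠] (0 : ℝ)) atTop :=
      tendsto_inv_nhdsGT_zero.comp habs
    have h2 : Tendsto (fun y : ℝ => 2 * (y ^ 2 * Real.exp (-y))) atTop (𝓝 (2 * 0)) :=
      (Real.tendsto_pow_mul_exp_neg_atTop_nhds_zero 2).const_mul 2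
    have key : Tendsto phiEx (𝓝[≠] (0 : ℝ)) (𝓝 0) := by
      apply squeeze_zero_norm' (a := fun u : ℝ => 2 * (|u|⁻¹ ^ 2 * Real.exp (-|u|⁻¹)))
      · filter_upwards [self_mem_nhdsWithin] with u hu
        have hu' : (u : ℝ) ≠ 0 := hu
        have hE : Real.exp (-1 / |u|) = Real.exp (-|u|⁻¹) := by
          rw [neg_div, one_div]
        have hsq : u⁻¹ ^ 2 = |u|⁻¹ ^ 2 := by
          rw [← abs_inv, sq_abs]
        have hEpos : (0 : ℝ) ≤ Real.exp (-|u|⁻¹) := (Real.exp_pos _).le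
        have hy : (0 : ℝ) ≤ |u|⁻¹ ^ 2 := by positivity
        rw [phiEx, if_neg hu', hE, hsq]
        rw [Real.norm_eq_abs]
        have hb : |u|⁻¹ ^ 2 * Real.exp (-|u|⁻¹) * Real.sin (1 / u) ≤
            |u|⁻¹ ^ 2 * Real.exp (-|u|⁻¹) := by
          nlinarith [Real.sin_le_one (1 / u), mul_nonneg hy hEpos]
        have hb2 : -(|u|⁻¹ ^ 2 * Real.exp (-|u|⁻¹)) ≤
            |u|⁻¹ ^ 2 * Real.exp (-|u|⁻¹) * Real.sin (1 / u) := by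
          nlinarith [Real.neg_one_le_sin (1 / u), mul_nonneg hy hEpos]
        rw [abs_le]
        constructor <;> nlinarith [mul_nonneg hy hEpos]
      · have h3 : Tendsto (fun u : ℝ => 2 * (|u|⁻¹ ^ 2 * Real.exp (-|u|⁻¹)))
            (𝓝[≠] (0 : ℝ)) (𝓝 (2 * 0)) := h2.comp h1
        rwa [mul_zero] at h3
    have hpure : Tendsto phiEx (pure (0 : ℝ)) (𝓝 0) := by
      have : phiEx 0 = 0 := by simp [phiEx]
      simpa [this] using (tendsto_pure_nhds phiEx (0 : ℝ))
    have : Tendsto phiEx (𝓝 (0 : ℝ)) (𝓝 0) := by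
      have h := key.sup hpure
      rwa [nhdsNE_sup_pure (0 : ℝ)] at h
    have h0 : phiEx 0 = 0 := by simp [phiEx]
    simpa [ContinuousAt, h0] using this
  · -- continuity away from 0
    have habs : |x| ≠ 0 := abs_ne_zero.2 hx
    have hψ : ContinuousAt (fun u : ℝ =>
        u⁻¹ ^ 2 * Real.exp (-1 / |u|) * Real.sin (1 / u)
          - u⁻¹ ^ 2 * Real.exp (-1 / |u|)) x := by
      have hinv : ContinuousAt (fun u : ℝ => u⁻¹) x := continuousAt_inv₀ hx
      have hdiv : ContinuousAt (fun u : ℝ => -1 / |u|) x :=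
        ContinuousAt.div continuousAt_const continuous_abs.continuousAt habs
      have hexp : ContinuousAt (fun u : ℝ => Real.exp (-1 / |u|)) x :=
        Real.continuous_exp.continuousAt.comp hdiv
      have hdiv2 : ContinuousAt (fun u : ℝ => 1 / u) x :=
        ContinuousAt.div continuousAt_const continuousAt_id hx
      have hsin : ContinuousAt (fun u : ℝ => Real.sin (1 / u)) x :=
        Real.continuous_sin.continuousAt.comp hdiv2
      exact (((hinv.pow 2).mul hexp).mul hsin).sub ((hinv.pow 2).mul hexp)
    apply hψ.congr
    filter_upwards [eventually_ne_nhds hx] with u hu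
    simp [phiEx, hu]

lemma gEx_hasDerivAt (x : ℝ) : HasDerivAt gEx (phiEx x) x := by
  have h := intervalIntegral.integral_hasDerivAt_right
    (phiEx_cont.intervalIntegrable 0 x)
    (phiEx_cont.stronglyMeasurable.stronglyMeasurableAtFilter)
    phiEx_cont.continuousAt
  exact h.congr_of_eventuallyEq (by filter_upwards with u; rw [gEx_eq])

/-- For every integer `k ≥ 1` and `t ∈ (0, π)`, `f` is differentiable at
`1/(2kπ - t)` with `f′(1/(2kπ - t)) = (2kπ - t)² e^{-(2kπ - t)} (1 - cos t)`, and
this value is at most `(1/2)(2kπ)² e^{2kπ} t²`. -/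
theorem fEx_deriv_near_kink :
    ∀ k : ℕ, 1 ≤ k → ∀ t ∈ Set.Ioo (0 : ℝ) Real.pi,
      HasDerivAt fEx
        ((2 * k * Real.pi - t) ^ 2 * Real.exp (-(2 * k * Real.pi - t)) * (1 - Real.cos t))
        (1 / (2 * k * Real.pi - t)) ∧
      (2 * k * Real.pi - t) ^ 2 * Real.exp (-(2 * k * Real.pi - t)) * (1 - Real.cos t) ≤
        1 / 2 * (2 * k * Real.pi) ^ 2 * Real.exp (2 * k * Real.pi) * t ^ 2 := by
  intro k hk t ht
  obtain ⟨ht0, htπ⟩ := ht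
  have hπ : (0 : ℝ) < Real.pi := Real.pi_pos
  have hk1 : (1 : ℝ) ≤ (k : ℝ) := by exact_mod_cast hk
  set c : ℝ := 2 * k * Real.pi - t with hc_def
  have hkpi : Real.pi ≤ (k : ℝ) * Real.pi := le_mul_of_one_le_left hπ.le hk1
  have hc0 : 0 < c := by simp only [hc_def]; nlinarith
  have hcne : c ≠ 0 := hc0.ne'
  set x₀ : ℝ := 1 / c with hx0_def
  have hx0pos : 0 < x₀ := by positivity
  have hx0ne : x₀ ≠ 0 := hx0pos.ne'
  have hxinv : x₀⁻¹ = c := by rw [hx0_def, one_div, inv_inv]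
  have hceq : c = (k : ℝ) * (2 * Real.pi) - t := by rw [hc_def]; ring
  have hcos : Real.cos c = Real.cos t := by rw [hceq]; exact Real.cos_nat_mul_two_pi_sub t k
  have hsin : Real.sin c = -Real.sin t := by rw [hceq]; exact Real.sin_nat_mul_two_pi_sub t k
  have hsint : 0 < Real.sin t := Real.sin_pos_of_pos_of_lt_pi ht0 htπ
  -- the local form of fEx
  have hF : HasDerivAt (fun x : ℝ => Real.exp (-x⁻¹) * Real.sin x⁻¹ - gEx x)
      ((Real.exp (-x₀⁻¹) * -(-(x₀ ^ 2)⁻¹)) * Real.sin x₀⁻¹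
        + Real.exp (-x₀⁻¹) * (Real.cos x₀⁻¹ * -(x₀ ^ 2)⁻¹) - phiEx x₀) x₀ := by
    have hinv : HasDerivAt (fun x : ℝ => x⁻¹) (-(x₀ ^ 2)⁻¹) x₀ := hasDerivAt_inv hx0ne
    exact ((hinv.neg.exp).mul hinv.sin).sub (gEx_hasDerivAt x₀)
  -- fEx agrees with the local form near x₀
  have hEq : fEx =ᶠ[𝓝 x₀] fun x : ℝ => Real.exp (-x⁻¹) * Real.sin x⁻¹ - gEx x := by
    have hpos : ∀ᶠ x in 𝓝 x₀, 0 < x := eventually_gt_nhds hx0pos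
    have hH : ContinuousAt (fun x : ℝ => Real.exp (-x⁻¹) * Real.sin x⁻¹) x₀ := by
      have hinv : ContinuousAt (fun x : ℝ => x⁻¹) x₀ := continuousAt_inv₀ hx0ne
      exact (Real.continuous_exp.continuousAt.comp hinv.neg).mul
        (Real.continuous_sin.continuousAt.comp hinv)
    have hval : Real.exp (-x₀⁻¹) * Real.sin x₀⁻¹ < 0 := by
      rw [hxinv, hsin]
      have := Real.exp_pos (-c)
      nlinarith
    have hneg : ∀ᶠ x in 𝓝 x₀, Real.exp (-x⁻¹) * Real.sin x⁻¹ < 0 :=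
      hH.tendsto.eventually (Iio_mem_nhds hval)
    filter_upwards [hpos, hneg] with x hx hxneg
    have hxne : x ≠ 0 := hx.ne'
    have habs : |x| = x := abs_of_pos hx
    have hh : hEx x = Real.exp (-x⁻¹) * Real.sin x⁻¹ := by
      rw [hEx, if_neg hxne, habs, neg_div, one_div]
    rw [fEx, habs, hh, min_eq_right hxneg.le]
  have hDeq : (Real.exp (-x₀⁻¹) * -(-(x₀ ^ 2)⁻¹)) * Real.sin x₀⁻¹
        + Real.exp (-x₀⁻¹) * (Real.cos x₀⁻¹ * -(x₀ ^ 2)⁻¹) - phiEx x₀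
      = c ^ 2 * Real.exp (-c) * (1 - Real.cos t) := by
    have hsq : (x₀ ^ 2)⁻¹ = c ^ 2 := by rw [← inv_pow, hxinv]
    have hphi : phiEx x₀ = c ^ 2 * Real.exp (-c) * Real.sin c - c ^ 2 * Real.exp (-c) := by
      rw [phiEx, if_neg hx0ne, abs_of_pos hx0pos, neg_div, one_div, hxinv]
    rw [hphi, hxinv, hsq, hcos]
    ring
  have hmain : HasDerivAt fEx (c ^ 2 * Real.exp (-c) * (1 - Real.cos t)) x₀ := by
    rw [← hDeq]
    exact hF.congr_of_eventuallyEq hEq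
  refine ⟨hmain, ?_⟩
  -- the inequality
  have hcost : 1 - Real.cos t ≤ t ^ 2 / 2 := by
    have := Real.one_sub_sq_div_two_le_cos (x := t)
    linarith
  have hcost0 : 0 ≤ 1 - Real.cos t := by
    have := Real.cos_le_one t
    linarith
  have hcle : c ≤ 2 * k * Real.pi := by rw [hc_def]; linarith
  have hsqle : c ^ 2 ≤ (2 * k * Real.pi) ^ 2 := by nlinarith
  have hexple : Real.exp (-c) ≤ Real.exp (2 * k * Real.pi) := by
    apply Real.exp_le_exp.2; nlinarith
  have hprod : c ^ 2 * Real.exp (-c) ≤ (2 * k * Real.pi) ^ 2 * Real.exp (2 * k * Real.pi) := by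
    apply mul_le_mul hsqle hexple (Real.exp_pos _).le (by positivity)
  calc c ^ 2 * Real.exp (-c) * (1 - Real.cos t)
      ≤ (2 * k * Real.pi) ^ 2 * Real.exp (2 * k * Real.pi) * (t ^ 2 / 2) := by
        apply mul_le_mul hprod hcost hcost0 (by positivity)
    _ = 1 / 2 * (2 * k * Real.pi) ^ 2 * Real.exp (2 * k * Real.pi) * t ^ 2 := by ring
end
end
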